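/- Let {ε_n}_{n≥1} be a strictly decreasing sequence in (0,1) with ε_n → 0, and suppose {1 - ε_n} is a thin Blaschke sequence, i.e. lim_{m→∞} ∏_{n : n ≠ m} d(1 - ε_n, 1 - ε_m) = 1. Then for every real θ₁ with 0 < |θ₁| < π/2, also lim_{m→∞} ∏_{n : n ≠ m} d(1 - ε_n, 1 - ε_m·e^{iθ₁}) = 1 (the points 1 - ε_m e^{iθ₁} lie in 𝔻 for all sufficiently large m, and the products are taken over those m). -/

import Mathlib

/-!
On the segment `b ↦ 1 - b` and the ray `b ↦ 1 - b e^{iθ}` one computes, for `0 < a ≤ 1` and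
`c = cos θ`,
`d(1 - a, 1 - b e^{iθ})² = (a² + b² - 2abc) / (a² + (1-a)²b² + 2a(1-a)bc)`,
which decreases in `c`. Hence each factor of the rotated product dominates the corresponding
factor of the thin product (`c = 1`). Once `ε_m ≤ 2 cos θ₁` the point `1 - ε_m e^{iθ₁}` lies in
the closed disk, so all factors are at most `1`, and the rotated products are squeezed between
the thin products and `1`.
-/

open Complex Filter Metric

/-- The pseudohyperbolic distance `d(z,w) = |z - w| / |1 - conj z * w|` on the unit disk. -/
noncomputable def pd (z w : ℂ) : ℝ :=
  ‖z - w‖ / ‖1 - (starRingEnd ℂ) z * w‖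

open ComplexConjugate

section ProductsInUnitInterval

variable {ι : Type*} {f g : ι → ℝ}

lemma multipliable_of_nonneg_of_le_one (h0 : ∀ i, 0 ≤ f i) (h1 : ∀ i, f i ≤ 1) :
    Multipliable f := by
  classical
  refine ⟨⨅ s : Finset ι, ∏ i ∈ s, f i, tendsto_atTop_ciInf ?_ ⟨0, ?_⟩⟩
  · intro s t hst
    change ∏ i ∈ t, f i ≤ ∏ i ∈ s, f i
    rw [← Finset.prod_sdiff hst]
    exact mul_le_of_le_one_left (Finset.prod_nonneg fun i _ => h0 i)
      (Finset.prod_le_one (fun i _ => h0 i) fun i _ => h1 i)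
  · rintro _ ⟨s, rfl⟩
    exact Finset.prod_nonneg fun i _ => h0 i

lemma tprod_le_one_of_nonneg_of_le_one (h0 : ∀ i, 0 ≤ f i) (h1 : ∀ i, f i ≤ 1) :
    ∏' i, f i ≤ 1 :=
  hasProd_le_of_prod_le (multipliable_of_nonneg_of_le_one h0 h1).hasProd fun _ =>
    Finset.prod_le_one (fun i _ => h0 i) fun i _ => h1 i

lemma tprod_le_tprod_of_nonneg_of_le_one (hf0 : ∀ i, 0 ≤ f i) (hfg : ∀ i, f i ≤ g i)
    (hg1 : ∀ i, g i ≤ 1) : ∏' i, f i ≤ ∏' i, g i := by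
  have hg0 i : 0 ≤ g i := (hf0 i).trans (hfg i)
  exact le_of_tendsto_of_tendsto'
    (multipliable_of_nonneg_of_le_one hf0 fun i => (hfg i).trans (hg1 i)).hasProd
    (multipliable_of_nonneg_of_le_one hg0 hg1).hasProd fun _ =>
      Finset.prod_le_prod (fun i _ => hf0 i) fun i _ => hfg i

end ProductsInUnitInterval

lemma normSq_ofReal_add_ofReal_mul_exp (x y θ : ℝ) :
    normSq (x + y * exp (I * θ)) = x ^ 2 + y ^ 2 + 2 * x * y * Real.cos θ := by
  rw [mul_comm I, exp_mul_I, ← ofReal_cos, ← ofReal_sin]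
  simp only [normSq_apply, add_re, add_im, mul_re, mul_im, ofReal_re, ofReal_im, I_re, I_im]
  linear_combination y ^ 2 * Real.sin_sq_add_cos_sq θ

lemma normSq_one_sub_conj_mul_sub_normSq_sub (z w : ℂ) :
    normSq (1 - conj z * w) - normSq (z - w) = (1 - normSq z) * (1 - normSq w) := by
  simp only [normSq_apply, sub_re, sub_im, mul_re, mul_im, conj_re, conj_im, one_re, one_im]
  ring

lemma pd_nonneg (z w : ℂ) : 0 ≤ pd z w :=
  div_nonneg (norm_nonneg _) (norm_nonneg _)

lemma pd_le_one {z w : ℂ} (hz : ‖z‖ ≤ 1) (hw : ‖w‖ ≤ 1) : pd z w ≤ 1 := by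
  refine div_le_one_of_le₀ ?_ (norm_nonneg _)
  rw [← sq_le_sq₀ (norm_nonneg _) (norm_nonneg _), ← normSq_eq_norm_sq, ← normSq_eq_norm_sq]
  have hz' : normSq z ≤ 1 := by rw [normSq_eq_norm_sq]; exact pow_le_one₀ (norm_nonneg _) hz
  have hw' : normSq w ≤ 1 := by rw [normSq_eq_norm_sq]; exact pow_le_one₀ (norm_nonneg _) hw
  linarith [normSq_one_sub_conj_mul_sub_normSq_sub z w, mul_nonneg (sub_nonneg.2 hz')
    (sub_nonneg.2 hw')]

lemma pd_sq (z w : ℂ) : pd z w ^ 2 = normSq (z - w) / normSq (1 - conj z * w) := by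
  rw [pd, div_pow, normSq_eq_norm_sq, normSq_eq_norm_sq]

lemma pd_one_sub_mul_exp_sq (a b θ : ℝ) :
    pd (1 - a) (1 - b * exp (I * θ)) ^ 2 =
      (a ^ 2 + b ^ 2 - 2 * a * b * Real.cos θ) /
        (a ^ 2 + (1 - a) ^ 2 * b ^ 2 + 2 * a * (1 - a) * b * Real.cos θ) := by
  have hnum : (1 - a : ℂ) - (1 - b * exp (I * θ)) = ((-a : ℝ) : ℂ) + b * exp (I * θ) := by
    push_cast; ring
  have hden : 1 - conj (1 - a : ℂ) * (1 - b * exp (I * θ)) =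
      (a : ℂ) + ((1 - a : ℝ) : ℂ) * b * exp (I * θ) := by
    simp only [map_sub, map_one, conj_ofReal]; push_cast; ring
  rw [pd_sq, hnum, hden, ← ofReal_mul, normSq_ofReal_add_ofReal_mul_exp,
    normSq_ofReal_add_ofReal_mul_exp]
  congr 1 <;> ring

lemma pd_one_sub_le_pd_one_sub_mul_exp {a b θ : ℝ} (ha0 : 0 < a)
    (ha1 : a ≤ 1) (hb : 0 ≤ b) (hθ : 0 ≤ Real.cos θ) :
    pd (1 - a) (1 - b) ≤ pd (1 - a) (1 - b * exp (I * θ)) := by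
  have hreal : (1 : ℂ) - b = 1 - b * exp (I * (0 : ℝ)) := by simp
  rw [← pow_le_pow_iff_left₀ (pd_nonneg _ _) (pd_nonneg _ _) two_ne_zero, hreal,
    pd_one_sub_mul_exp_sq, pd_one_sub_mul_exp_sq, Real.cos_zero]
  set c := Real.cos θ
  have hc1 : c ≤ 1 := Real.cos_le_one θ
  have hab : 0 ≤ a * (1 - a) * b := by have := sub_nonneg.2 ha1; positivity
  rw [div_le_div_iff₀ (by nlinarith) (by nlinarith [mul_nonneg hab hθ])]
  -- cross-multiplying, the difference of the two sides is this product of nonnegative factors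
  have key :
      0 ≤ 2 * a * b * (1 - c) * ((1 - a) * (a ^ 2 + b ^ 2) + a ^ 2 + (1 - a) ^ 2 * b ^ 2) := by
    have := sub_nonneg.2 ha1; have := sub_nonneg.2 hc1; positivity
  nlinarith [key]

lemma norm_one_sub_ofReal_mul_exp_le_one {b θ : ℝ} (hb : 0 ≤ b) (hbθ : b ≤ 2 * Real.cos θ) :
    ‖1 - b * exp (I * θ)‖ ≤ 1 := by
  have h : (1 : ℂ) - b * exp (I * θ) = ((1 : ℝ) : ℂ) + ((-b : ℝ) : ℂ) * exp (I * θ) := by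
    push_cast; ring
  rw [← sq_le_one_iff₀ (norm_nonneg _), ← normSq_eq_norm_sq, h,
    normSq_ofReal_add_ofReal_mul_exp]
  nlinarith

lemma norm_one_sub_ofReal_le_one {a : ℝ} (ha0 : 0 ≤ a) (ha1 : a ≤ 2) : ‖1 - (a : ℂ)‖ ≤ 1 := by
  rw [← ofReal_one, ← ofReal_sub, norm_real, Real.norm_eq_abs, abs_le]
  constructor <;> linarith

theorem stmt8_general (ε : ℕ → ℝ) (hmem : ∀ n, ε n ∈ Set.Ioo (0 : ℝ) 1)
    (hlim : Tendsto ε atTop (nhds 0))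
    (hthin : Tendsto (fun m : ℕ =>
      ∏' n : {n : ℕ // n ≠ m}, pd (1 - (ε (n : ℕ) : ℂ)) (1 - (ε m : ℂ))) atTop (nhds 1))
    (θ₁ : ℝ) (h2 : |θ₁| < Real.pi / 2) :
    Tendsto (fun m : ℕ =>
      ∏' n : {n : ℕ // n ≠ m},
        pd (1 - (ε (n : ℕ) : ℂ)) (1 - (ε m : ℂ) * Complex.exp (Complex.I * θ₁)))
      atTop (nhds 1) := by
  have hcos : 0 < Real.cos θ₁ := Real.cos_pos_of_mem_Ioo (abs_lt.1 h2)
  have hsmall : ∀ᶠ m in atTop, ε m ≤ 2 * Real.cos θ₁ :=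
    hlim.eventually (ge_mem_nhds (by positivity))
  have hle_one : ∀ᶠ m in atTop, ∀ n,
      pd (1 - (ε n : ℂ)) (1 - (ε m : ℂ) * Complex.exp (Complex.I * θ₁)) ≤ 1 := by
    filter_upwards [hsmall] with m hm n
    exact pd_le_one (norm_one_sub_ofReal_le_one (hmem n).1.le (by linarith [(hmem n).2]))
      (norm_one_sub_ofReal_mul_exp_le_one (hmem m).1.le hm)
  refine tendsto_of_tendsto_of_tendsto_of_le_of_le' hthin tendsto_const_nhds ?_ ?_
  · filter_upwards [hle_one] with m hm
    exact tprod_le_tprod_of_nonneg_of_le_one (fun _ => pd_nonneg _ _)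
      (fun n => pd_one_sub_le_pd_one_sub_mul_exp (hmem n).1 (hmem n).2.le
        (hmem m).1.le hcos.le) fun n => hm n
  · filter_upwards [hle_one] with m hm
    exact tprod_le_one_of_nonneg_of_le_one (fun _ => pd_nonneg _ _) fun n => hm n

/-- If `ε_n` decreases strictly to `0` in `(0,1)` and `{1 - ε_n}` is a thin Blaschke
sequence, then for any `θ₁` with `0 < |θ₁| < π/2` also
`lim_{m→∞} ∏_{n ≠ m} d(1 - ε_n, 1 - ε_m e^{iθ₁}) = 1`. -/
theorem stmt8 (ε : ℕ → ℝ) (hdec : StrictAnti ε) (hmem : ∀ n, ε n ∈ Set.Ioo (0 : ℝ) 1)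
    (hlim : Tendsto ε atTop (nhds 0))
    (hthin : Tendsto (fun m : ℕ =>
      ∏' n : {n : ℕ // n ≠ m}, pd (1 - (ε (n : ℕ) : ℂ)) (1 - (ε m : ℂ))) atTop (nhds 1))
    (θ₁ : ℝ) (h1 : 0 < |θ₁|) (h2 : |θ₁| < Real.pi / 2) :
    Tendsto (fun m : ℕ =>
      ∏' n : {n : ℕ // n ≠ m},
        pd (1 - (ε (n : ℕ) : ℂ)) (1 - (ε m : ℂ) * Complex.exp (Complex.I * θ₁)))
      atTop (nhds 1) :=
  stmt8_general ε hmem hlim hthin θ₁ h2
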